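/- arXiv:math/9905052 — 4 statements merged into one kernel-verified Lean document; each statement's English description precedes it below -/
import Mathlib

section
/- Let V be a real vector space and ω an alternating bilinear form on V. Define the linear map T : V × V → V × V* by T(P, Q) = ((P + Q)/2, ω(Q − P, ·)), and define the canonical symplectic pairing Ω on V × V* by Ω((v, p), (v', p')) = p'(v) − p(v'). Then for all (P, Q), (P', Q') in V × V one has Ω(T(P, Q), T(P', Q')) = ω(P, P') − ω(Q, Q'). In other words, T pulls back the canonical symplectic form of T*V to the difference of the symplectic forms on the two factors of V̄ × V. -/
/-- Let `ω` be an alternating bilinear form on a real vector space `V`. The map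
`T(P, Q) = ((P + Q)/2, ω(Q - P, ·))` from `V̄ × V` to `V × V*` pulls back the canonical
symplectic pairing `Ω((v, p), (v', p')) = p'(v) - p(v')` of `T*V` to
`ω(P, P') - ω(Q, Q')`. -/
theorem pullback_canonical_symplectic_form
    (V : Type*) [AddCommGroup V] [Module ℝ V]
    (ω : V →ₗ[ℝ] V →ₗ[ℝ] ℝ) (hω : ∀ u, ω u u = 0)
    (T : V × V → V × (V →ₗ[ℝ] ℝ))
    (hT : ∀ P Q : V, T (P, Q) = ((2:ℝ)⁻¹ • (P + Q), ω (Q - P)))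
    (Ω : (V × (V →ₗ[ℝ] ℝ)) → (V × (V →ₗ[ℝ] ℝ)) → ℝ)
    (hΩ : ∀ a b : V × (V →ₗ[ℝ] ℝ), Ω a b = b.2 a.1 - a.2 b.1) :
    ∀ P Q P' Q' : V, Ω (T (P, Q)) (T (P', Q')) = ω P P' - ω Q Q' := by
  intro P Q P' Q'
  have skew : ∀ u v : V, ω u v = -ω v u := by
    intro u v
    have h := hω (u + v)
    simp only [map_add, LinearMap.add_apply, hω] at h
    linarith
  rw [hΩ, hT, hT]
  simp only [map_sub, map_add, map_smul, LinearMap.sub_apply, LinearMap.smul_apply,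
    LinearMap.add_apply, smul_eq_mul]
  rw [skew Q' P, skew Q' Q, skew P' P, skew P' Q]
  ring
end

section
/- Let V = (Fin n → ℝ) × (Fin n → ℝ) with the standard symplectic form ω((q, p), (q', p')) = ⟨p, q'⟩ − ⟨p', q⟩. Let H : V → ℝ be twice continuously differentiable, and let X : V → V be its Hamiltonian vector field, i.e. X is differentiable and for all x, v ∈ V, (fderiv H x)(v) = ω(X(x), v). Define ψ, φ : V → V by ψ(x) = x − X(x)/2 and φ(x) = x + X(x)/2. Suppose Φ : V → V is differentiable and satisfies Φ(ψ(x)) = φ(x) for all x ∈ V, and suppose that for a given x ∈ V the linear map Dψ(x) = id − (fderiv X x)/2 is bijective. Then the derivative of Φ at ψ(x) is a linear symplectic map: for all u, v ∈ V, ω((fderiv Φ (ψ x))(u), (fderiv Φ (ψ x))(v)) = ω(u, v). In other words, the generating-function construction x-with-vector-X(x)-centered-at-x, sending tails to heads, produces a symplectic transformation Φ_H. -/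
noncomputable def sympBilin (n : ℕ) :
    ((Fin n → ℝ) × (Fin n → ℝ)) →ₗ[ℝ] ((Fin n → ℝ) × (Fin n → ℝ)) →ₗ[ℝ] ℝ :=
  LinearMap.mk₂ ℝ (fun a b => (∑ i, a.2 i * b.1 i) - ∑ i, b.2 i * a.1 i)
    (by intro a a' b; simp [add_mul, mul_add, Finset.sum_add_distrib]; ring)
    (by intro c a b
        simp only [Prod.smul_snd, Prod.smul_fst, Pi.smul_apply, smul_eq_mul, Finset.mul_sum,
          mul_sub]
        congr 1 <;> exact Finset.sum_congr rfl (fun i _ => by ring))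
    (by intro a b b'; simp [add_mul, mul_add, Finset.sum_add_distrib]; ring)
    (by intro c a b
        simp only [Prod.smul_snd, Prod.smul_fst, Pi.smul_apply, smul_eq_mul, Finset.mul_sum,
          mul_sub]
        congr 1 <;> exact Finset.sum_congr rfl (fun i _ => by ring))

noncomputable def sympOmega (n : ℕ) :
    ((Fin n → ℝ) × (Fin n → ℝ)) →L[ℝ] ((Fin n → ℝ) × (Fin n → ℝ)) →L[ℝ] ℝ :=
  LinearMap.toContinuousLinearMap
    ((LinearMap.toContinuousLinearMap.toLinearMap).comp (sympBilin n))

lemma sympOmega_apply (n : ℕ) (a b : (Fin n → ℝ) × (Fin n → ℝ)) :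
    sympOmega n a b = (∑ i, a.2 i * b.1 i) - ∑ i, b.2 i * a.1 i := rfl



/-- Generating functions produce symplectic transformations. On
`V = (Fin n → ℝ) × (Fin n → ℝ)` with the standard symplectic form
`ω((q,p),(q',p')) = ⟨p,q'⟩ - ⟨p',q⟩`, let `H` be a `C²` function with Hamiltonian vector
field `X` (`dH(x)v = ω(X(x), v)`), and let `ψ(x) = x - X(x)/2`, `φ(x) = x + X(x)/2`. If a
differentiable map `Φ` satisfies `Φ ∘ ψ = φ` (it sends the tail of the vector `X(x)`
centered at `x` to its head) and `Dψ(x) = id - DX(x)/2` is bijective at `x`, then `DΦ` at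
`ψ(x)` is a linear symplectic map. -/
theorem generating_function_gives_symplectic_map (n : ℕ)
    (ω : ((Fin n → ℝ) × (Fin n → ℝ)) → ((Fin n → ℝ) × (Fin n → ℝ)) → ℝ)
    (hω : ∀ a b : (Fin n → ℝ) × (Fin n → ℝ),
      ω a b = (∑ i, a.2 i * b.1 i) - ∑ i, b.2 i * a.1 i)
    (H : ((Fin n → ℝ) × (Fin n → ℝ)) → ℝ) (hH : ContDiff ℝ 2 H)
    (X : ((Fin n → ℝ) × (Fin n → ℝ)) → ((Fin n → ℝ) × (Fin n → ℝ)))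
    (hXdiff : Differentiable ℝ X)
    (hX : ∀ x v : (Fin n → ℝ) × (Fin n → ℝ), fderiv ℝ H x v = ω (X x) v)
    (ψ φ : ((Fin n → ℝ) × (Fin n → ℝ)) → ((Fin n → ℝ) × (Fin n → ℝ)))
    (hψ : ∀ x, ψ x = x - (2:ℝ)⁻¹ • X x)
    (hφ : ∀ x, φ x = x + (2:ℝ)⁻¹ • X x)
    (Φ : ((Fin n → ℝ) × (Fin n → ℝ)) → ((Fin n → ℝ) × (Fin n → ℝ)))
    (hΦdiff : Differentiable ℝ Φ)
    (hΦ : ∀ x, Φ (ψ x) = φ x)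
    (x : (Fin n → ℝ) × (Fin n → ℝ))
    (hbij : Function.Bijective fun v => v - (2:ℝ)⁻¹ • fderiv ℝ X x v) :
    ∀ u v : (Fin n → ℝ) × (Fin n → ℝ),
      ω (fderiv ℝ Φ (ψ x) u) (fderiv ℝ Φ (ψ x) v) = ω u v := by
  set Ω := sympOmega n with hΩdef
  set A := fderiv ℝ X x with hAdef
  have hωΩ : ∀ a b, ω a b = Ω a b := by
    intro a b; rw [hω, sympOmega_apply]
  have hskew : ∀ a b, Ω a b = -Ω b a := by
    intro a b; simp only [hΩdef, sympOmega_apply]; ring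
  -- gradient relation
  have hgrad : ∀ y, fderiv ℝ H y = Ω (X y) := by
    intro y; refine ContinuousLinearMap.ext fun v => ?_; rw [hX, hωΩ]
  -- second derivative
  have hB : fderiv ℝ (fderiv ℝ H) x = Ω.comp A := by
    have h1 : HasFDerivAt (fun y => Ω (X y)) (Ω.comp A) x :=
      Ω.hasFDerivAt.comp x (hXdiff x).hasFDerivAt
    have h2 : (fun y => fderiv ℝ H y) = fun y => Ω (X y) := funext hgrad
    rw [show (fderiv ℝ H) = fun y => fderiv ℝ H y from rfl, h2]
    exact h1.fderiv
  have hsymm : ∀ u v, Ω (A u) v = Ω (A v) u := by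
    intro u v
    have h2 : IsSymmSndFDerivAt ℝ H x :=
      hH.contDiffAt.isSymmSndFDerivAt (by norm_num)
    have := h2 u v
    rw [hB] at this
    simpa using this
  -- derivatives of ψ and φ
  have hψ' : HasFDerivAt ψ (ContinuousLinearMap.id ℝ _ - (2:ℝ)⁻¹ • A) x := by
    have h := (hasFDerivAt_id x).sub (((hXdiff x).hasFDerivAt).const_smul ((2:ℝ)⁻¹))
    have : ψ = fun y => y - (2:ℝ)⁻¹ • X y := funext hψ
    rw [this]; exact h
  have hφ' : HasFDerivAt φ (ContinuousLinearMap.id ℝ _ + (2:ℝ)⁻¹ • A) x := by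
    have h := (hasFDerivAt_id x).add (((hXdiff x).hasFDerivAt).const_smul ((2:ℝ)⁻¹))
    have : φ = fun y => y + (2:ℝ)⁻¹ • X y := funext hφ
    rw [this]; exact h
  have hchain : HasFDerivAt (fun y => Φ (ψ y))
      ((fderiv ℝ Φ (ψ x)).comp (ContinuousLinearMap.id ℝ _ - (2:ℝ)⁻¹ • A)) x :=
    (hΦdiff (ψ x)).hasFDerivAt.comp x hψ'
  have heqfun : (fun y => Φ (ψ y)) = φ := funext hΦ
  rw [heqfun] at hchain
  have heq : (fderiv ℝ Φ (ψ x)).comp (ContinuousLinearMap.id ℝ _ - (2:ℝ)⁻¹ • A)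
      = ContinuousLinearMap.id ℝ _ + (2:ℝ)⁻¹ • A := hchain.unique hφ'
  intro u v
  obtain ⟨u₀, hu₀⟩ := hbij.2 u
  obtain ⟨v₀, hv₀⟩ := hbij.2 v
  simp only at hu₀ hv₀
  have happ : ∀ w, fderiv ℝ Φ (ψ x) (w - (2:ℝ)⁻¹ • A w) = w + (2:ℝ)⁻¹ • A w := by
    intro w
    have := DFunLike.congr_fun heq w
    simpa using this
  rw [← hu₀, ← hv₀, happ, happ]
  have hc : Ω u₀ (A v₀) = -Ω (A u₀) v₀ := by rw [hskew, hsymm]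
  simp only [hωΩ, map_add, map_sub, map_smul, ContinuousLinearMap.add_apply,
    ContinuousLinearMap.sub_apply, ContinuousLinearMap.smul_apply, smul_eq_mul]
  linarith [hc]
end

section
/- Let S² = {v ∈ ℝ³ : ‖v‖ = 1} be the unit sphere. The map sending a pair (P, Q) to ((P + Q)/‖P + Q‖, Q − P) is a bijection from the set {(P, Q) ∈ S² × S² : Q ≠ −P} of non-antipodal pairs of points of S² onto the set {(x, u) ∈ ℝ³ × ℝ³ : ‖x‖ = 1, ⟨x, u⟩ = 0, ‖u‖ < 2} of tangent vectors to S² of length less than 2. -/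
/-!
For unit vectors `P`, `Q` the vectors `P + Q` and `Q - P` are orthogonal and, by the
parallelogram law, `‖P + Q‖² + ‖Q - P‖² = 4`. Hence `t := ‖P + Q‖ / 2 = √(1 - ‖u‖² / 4)` is
determined by `u = Q - P`, and `(P, Q) = (t • x - u / 2, t • x + u / 2)`. Conversely, for `x` a
unit vector orthogonal to `u` with `‖u‖ < 2`, these two points are unit vectors by Pythagoras,
and they are not antipodal since their sum is `2 t • x` with `t > 0`.
-/

open Real RealInnerProductSpace Set

noncomputable section

namespace SphereChord

variable {E : Type*} [NormedAddCommGroup E] [InnerProductSpace ℝ E]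

variable (E) in
def nonAntipodalPairs : Set (E × E) :=
  {PQ | ‖PQ.1‖ = 1 ∧ ‖PQ.2‖ = 1 ∧ PQ.2 ≠ -PQ.1}

variable (E) in
def shortTangentVectors : Set (E × E) :=
  {xu | ‖xu.1‖ = 1 ∧ ⟪xu.1, xu.2⟫ = 0 ∧ ‖xu.2‖ < 2}

def toTangent (PQ : E × E) : E × E :=
  (‖PQ.1 + PQ.2‖⁻¹ • (PQ.1 + PQ.2), PQ.2 - PQ.1)

def ofTangent (xu : E × E) : E × E :=
  let c := √(1 - ‖xu.2‖ ^ 2 / 4) • xu.1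
  (c - (2 : ℝ)⁻¹ • xu.2, c + (2 : ℝ)⁻¹ • xu.2)

theorem norm_add_sq_add_norm_sub_sq_of_norm_eq_one {P Q : E} (hP : ‖P‖ = 1) (hQ : ‖Q‖ = 1) :
    ‖P + Q‖ ^ 2 + ‖Q - P‖ ^ 2 = 4 := by
  have h := parallelogram_law_with_norm ℝ Q P
  rw [add_comm Q P, hP, hQ] at h
  linarith

theorem sqrt_one_sub_norm_sub_sq_div_four {P Q : E} (hP : ‖P‖ = 1) (hQ : ‖Q‖ = 1) :
    √(1 - ‖Q - P‖ ^ 2 / 4) = ‖P + Q‖ / 2 := by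
  have h := norm_add_sq_add_norm_sub_sq_of_norm_eq_one hP hQ
  rw [show 1 - ‖Q - P‖ ^ 2 / 4 = (‖P + Q‖ / 2) ^ 2 by linarith]
  exact sqrt_sq (by positivity)

theorem norm_add_eq_one_and_norm_sub_eq_one {a b : E} (hab : ⟪a, b⟫ = 0)
    (hnorm : ‖a‖ ^ 2 + ‖b‖ ^ 2 = 1) : ‖a + b‖ = 1 ∧ ‖a - b‖ = 1 := by
  have hadd := norm_add_sq_eq_norm_sq_add_norm_sq_real hab
  have hsub := norm_sub_sq_eq_norm_sq_add_norm_sq_real hab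
  constructor <;> nlinarith [norm_nonneg (a + b), norm_nonneg (a - b)]

theorem mapsTo_toTangent :
    MapsTo toTangent (nonAntipodalPairs E) (shortTangentVectors E) := by
  rintro ⟨P, Q⟩ ⟨hP, hQ, hne⟩
  dsimp only [toTangent] at hP hQ hne ⊢
  have hsum : P + Q ≠ 0 := fun h => hne (eq_neg_of_add_eq_zero_right h)
  refine ⟨norm_smul_inv_norm hsum, ?_, ?_⟩
  · rw [real_inner_smul_left, add_comm, (real_inner_add_sub_eq_zero_iff Q P).2 (hQ.trans hP.symm),
      mul_zero]
  · have h := norm_add_sq_add_norm_sub_sq_of_norm_eq_one hP hQ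
    have hpos : 0 < ‖P + Q‖ := norm_pos_iff.2 hsum
    nlinarith [norm_nonneg (Q - P)]

theorem mapsTo_ofTangent :
    MapsTo ofTangent (shortTangentVectors E) (nonAntipodalPairs E) := by
  rintro ⟨x, u⟩ ⟨hx, hxu, hu⟩
  dsimp only [ofTangent] at hx hxu hu ⊢
  set t := √(1 - ‖u‖ ^ 2 / 4)
  have ht : 0 < t := sqrt_pos.2 (by nlinarith [norm_nonneg u])
  have ht2 : t ^ 2 = 1 - ‖u‖ ^ 2 / 4 := sq_sqrt (by nlinarith [norm_nonneg u])
  have hunit := norm_add_eq_one_and_norm_sub_eq_one (a := t • x) (b := (2 : ℝ)⁻¹ • u)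
    (by rw [real_inner_smul_left, real_inner_smul_right, hxu]; ring)
    (by rw [norm_smul, norm_smul, hx, norm_of_nonneg ht.le]; norm_num; linarith)
  refine ⟨hunit.2, hunit.1, fun h => ?_⟩
  have hx0 : (2 * t) • x = 0 := by linear_combination (norm := module) h
  rcases smul_eq_zero.1 hx0 with h0 | h0
  · linarith
  · simp [h0] at hx

theorem leftInvOn_ofTangent_toTangent :
    LeftInvOn ofTangent toTangent (nonAntipodalPairs E) := by
  rintro ⟨P, Q⟩ ⟨hP, hQ, hne⟩
  have hsum : ‖P + Q‖ ≠ 0 := norm_ne_zero_iff.2 fun h => hne (eq_neg_of_add_eq_zero_right h)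
  have hmid : (‖P + Q‖ / 2) • ‖P + Q‖⁻¹ • (P + Q) = (2 : ℝ)⁻¹ • (P + Q) := by
    rw [smul_smul]; congr 1; field_simp
  simp only [toTangent, ofTangent, sqrt_one_sub_norm_sub_sq_div_four hP hQ, hmid]
  exact Prod.ext (by module) (by module)

theorem rightInvOn_ofTangent_toTangent :
    RightInvOn ofTangent toTangent (shortTangentVectors E) := by
  rintro ⟨x, u⟩ ⟨hx, -, hu⟩
  dsimp only [toTangent, ofTangent] at hx hu ⊢
  set t := √(1 - ‖u‖ ^ 2 / 4)
  have ht : 0 < t := sqrt_pos.2 (by nlinarith [norm_nonneg u])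
  have hsum : (t • x - (2 : ℝ)⁻¹ • u) + (t • x + (2 : ℝ)⁻¹ • u) = (2 * t) • x := by module
  have hnorm : ‖(2 * t) • x‖ = 2 * t := by
    rw [norm_smul, hx, mul_one, norm_of_nonneg (by positivity)]
  simp only [hsum, hnorm, smul_smul, inv_mul_cancel₀ (by positivity : 2 * t ≠ 0), one_smul]
  exact Prod.ext rfl (by module)

end SphereChord

end

open SphereChord in
/-- The map `(P, Q) ↦ ((P + Q)/‖P + Q‖, Q - P)` is a bijection from the set of
non-antipodal pairs of points of the unit sphere `S² ⊆ ℝ³` onto the set of tangent vectors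
to `S²` of length less than `2`. -/
theorem sphere_pairs_to_tangent_vectors_bijective :
    Set.BijOn
      (fun PQ : EuclideanSpace ℝ (Fin 3) × EuclideanSpace ℝ (Fin 3) =>
        (‖PQ.1 + PQ.2‖⁻¹ • (PQ.1 + PQ.2), PQ.2 - PQ.1))
      {PQ : EuclideanSpace ℝ (Fin 3) × EuclideanSpace ℝ (Fin 3) |
        ‖PQ.1‖ = 1 ∧ ‖PQ.2‖ = 1 ∧ PQ.2 ≠ -PQ.1}
      {xu : EuclideanSpace ℝ (Fin 3) × EuclideanSpace ℝ (Fin 3) |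
        ‖xu.1‖ = 1 ∧ inner ℝ xu.1 xu.2 = (0:ℝ) ∧ ‖xu.2‖ < 2} :=
  InvOn.bijOn ⟨leftInvOn_ofTangent_toTangent, rightInvOn_ofTangent_toTangent⟩
    mapsTo_toTangent (mapsTo_ofTangent (E := EuclideanSpace ℝ (Fin 3)))
end

section
/- Let V be a real vector space and ω an alternating bilinear form on V. Let S₁, S₂, S : V → V be linear maps and P, Q, R ∈ V points satisfying the implicit midpoint relations Q − P = S₁((P + Q)/2), R − Q = S₂((Q + R)/2), and R − P = S((P + R)/2) (so that the linear symplectic transformations generated by the quadratic functions H₁(x) = ½ω(S₁x, x), H₂(x) = ½ω(S₂x, x), H(x) = ½ω(Sx, x) send P to Q, Q to R, and P to R respectively). Set x₁ = (P + Q)/2, x₂ = (Q + R)/2, x₃ = (P + R)/2. Then the composition law for generating functions holds: H₁(x₁) + H₂(x₂) + ½ω(Q − P, R − P) = H(x₃), i.e. the generating function of the composition is H(x) = H₁(x₁) + H₂(x₂) + the symplectic area of the triangle PQR. -/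
/-- Composition law for quadratic generating functions. If the linear symplectic
transformations generated by `H₁(x) = ½ω(S₁x, x)`, `H₂(x) = ½ω(S₂x, x)`,
`H(x) = ½ω(Sx, x)` send `P ↦ Q`, `Q ↦ R`, `P ↦ R` respectively (i.e. the implicit midpoint
relations `Q - P = S₁((P+Q)/2)`, `R - Q = S₂((Q+R)/2)`, `R - P = S((P+R)/2)` hold), then
with `x₁ = (P+Q)/2`, `x₂ = (Q+R)/2`, `x₃ = (P+R)/2` one has
`H₁(x₁) + H₂(x₂) + (symplectic area of triangle PQR) = H(x₃)`. -/
theorem generating_function_composition_law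
    (V : Type*) [AddCommGroup V] [Module ℝ V]
    (ω : V →ₗ[ℝ] V →ₗ[ℝ] ℝ) (halt : ∀ u, ω u u = 0)
    (S₁ S₂ S : V →ₗ[ℝ] V) (P Q R : V)
    (h₁ : Q - P = S₁ ((2:ℝ)⁻¹ • (P + Q)))
    (h₂ : R - Q = S₂ ((2:ℝ)⁻¹ • (Q + R)))
    (h : R - P = S ((2:ℝ)⁻¹ • (P + R)))
    (x₁ x₂ x₃ : V)
    (hx₁ : x₁ = (2:ℝ)⁻¹ • (P + Q))
    (hx₂ : x₂ = (2:ℝ)⁻¹ • (Q + R))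
    (hx₃ : x₃ = (2:ℝ)⁻¹ • (P + R)) :
    (2:ℝ)⁻¹ * ω (S₁ x₁) x₁ + (2:ℝ)⁻¹ * ω (S₂ x₂) x₂ +
        (2:ℝ)⁻¹ * ω (Q - P) (R - P) = (2:ℝ)⁻¹ * ω (S x₃) x₃ := by
  subst hx₁ hx₂ hx₃
  rw [← h₁, ← h₂, ← h]
  have hskew : ∀ u v : V, ω u v = - ω v u := by
    intro u v
    have := halt (u + v)
    simp [map_add, halt] at this
    linarith
  simp only [map_sub, map_add, map_smul, LinearMap.sub_apply, LinearMap.add_apply,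
    LinearMap.smul_apply, smul_eq_mul]
  linear_combination (-4:ℝ)⁻¹ * hskew Q P + (4:ℝ)⁻¹ * hskew R Q + (-4:ℝ)⁻¹ * hskew R P + (2:ℝ)⁻¹ * halt P
end
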